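/- Let $\phi\in\mathbb{B}^+$, $\rho>0$ and $h\in\mathbb{B}^+$ satisfy $P_\phi h=\rho h$ pointwise, and define the normalized weights $u_i(x)=\phi(\tau_i(x))h(\tau_i(x))/(\rho h(x))$ for $i=0,\dots,d-1$. Let $\nu$ be a Borel probability measure on $[0,1]$ and let $v_0,\dots,v_{d-1}:[0,1]\to(0,1]$ be Borel measurable with $\sum_{i=0}^{d-1}v_i=1$ such that $\int\sum_{i=0}^{d-1}v_i(x)f(\tau_i(x))\,d\nu(x)=\int f\,d\nu$ for every bounded Borel $f:[0,1]\to\mathbb{R}$. If the equality $-\int\sum_{i=0}^{d-1}v_i\ln v_i\,d\nu+\int\ln\phi\,d\nu=\ln\rho$ holds, then $v_i=u_i$ $\nu$-almost everywhere for each $i$, and consequently $\nu$ is invariant for the normalized operator: $\int\sum_{i=0}^{d-1}u_i(x)f(\tau_i(x))\,d\nu(x)=\int f\,d\nu$ for every bounded Borel $f:[0,1]\to\mathbb{R}$. -/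

import Mathlib

/-!
Put `g = ∑ vᵢ (log uᵢ - log vᵢ)`. For `a, b > 0` one has
`b (log a - log b) = a - b - a · klFun (b / a)` with `klFun ≥ 0` vanishing only at `1`, so
`∑ uᵢ = ∑ vᵢ = 1` gives `g = -∑ uᵢ klFun (vᵢ / uᵢ) ≤ 0`. On the other hand
`log uᵢ = log (φ h) ∘ τᵢ - log ρ - log h`, so the `v`-invariance of `ν` applied to `log (φ h)`
turns the entropy equality into `∫ g dν = 0`. Hence every `uᵢ klFun (vᵢ / uᵢ)` vanishes a.e.,
i.e. `vᵢ = uᵢ` a.e., and the invariance of `ν` passes from `v` to `u`.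
-/

open MeasureTheory

noncomputable section

/-- `f ∈ 𝔹⁺` : Borel measurable and bounded away from `0` and `∞`. -/
def MemBplus (f : unitInterval → ℝ) : Prop :=
  Measurable f ∧ ∃ c C : ℝ, 0 < c ∧ (∀ x, c ≤ f x) ∧ (∀ x, f x ≤ C)

open Real InformationTheory Finset

lemma sub_sub_mul_log_sub_log {a b : ℝ} (ha : 0 < a) (hb : 0 < b) :
    a - b - b * (log a - log b) = a * klFun (b / a) := by
  rw [klFun_apply, log_div hb.ne' ha.ne']
  field_simp
  ring

lemma sum_mul_log_sub_log_eq_neg_sum_mul_klFun {ι : Type*} [Fintype ι] {p q : ι → ℝ}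
    (hp : ∀ i, 0 < p i) (hq : ∀ i, 0 < q i) (hsum : ∑ i, q i = ∑ i, p i) :
    ∑ i, q i * (log (p i) - log (q i)) = -∑ i, p i * klFun (q i / p i) := by
  have hterm : ∀ i, q i * (log (p i) - log (q i)) = p i - q i - p i * klFun (q i / p i) :=
    fun i => by linarith [sub_sub_mul_log_sub_log (hp i) (hq i)]
  simp only [hterm, sum_sub_distrib, hsum, sub_self, zero_sub]

theorem ae_eq_of_integral_sum_mul_log_sub_log_eq_zero {α ι : Type*} [Fintype ι]
    [MeasurableSpace α] {μ : Measure α} {p q : ι → α → ℝ}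
    (hp : ∀ i x, 0 < p i x) (hq : ∀ i x, 0 < q i x) (hsum : ∀ x, ∑ i, q i x = ∑ i, p i x)
    (hint : Integrable (fun x => ∑ i, q i x * (log (p i x) - log (q i x))) μ)
    (hzero : ∫ x, ∑ i, q i x * (log (p i x) - log (q i x)) ∂μ = 0) (i : ι) :
    q i =ᵐ[μ] p i := by
  have hterm_nonneg : ∀ x j, 0 ≤ p j x * klFun (q j x / p j x) := fun x j =>
    mul_nonneg (hp j x).le (klFun_nonneg (div_pos (hq j x) (hp j x)).le)
  have hneg : (fun x => ∑ i, q i x * (log (p i x) - log (q i x)))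
      = fun x => -∑ j, p j x * klFun (q j x / p j x) :=
    funext fun x => sum_mul_log_sub_log_eq_neg_sum_mul_klFun (hp · x) (hq · x) (hsum x)
  rw [hneg] at hint hzero
  have hK : (fun x => ∑ j, p j x * klFun (q j x / p j x)) =ᵐ[μ] 0 :=
    (integral_eq_zero_iff_of_nonneg (fun x => sum_nonneg fun j _ => hterm_nonneg x j)
      (by simpa using hint.neg)).1 (by simpa [integral_neg] using hzero)
  filter_upwards [hK] with x hx
  have hi := (sum_eq_zero_iff_of_nonneg fun j _ => hterm_nonneg x j).1 hx i (mem_univ i)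
  rwa [mul_eq_zero, or_iff_right (hp i x).ne', klFun_eq_zero_iff (div_pos (hq i x) (hp i x)).le,
    div_eq_one_iff_eq (hp i x).ne'] at hi

lemma abs_mul_log_le_one {t : ℝ} (h0 : 0 ≤ t) (h1 : t ≤ 1) : |t * log t| ≤ 1 := by
  rw [abs_of_nonpos (mul_log_nonpos h0 h1)]
  have := negMulLog_le_one_sub_self h0
  rw [negMulLog_eq_neg] at this
  linarith

lemma abs_sum_mul_le_of_sum_eq_one {ι : Type*} [Fintype ι] {w a : ι → ℝ} {C : ℝ}
    (hw : ∀ i, 0 ≤ w i) (hsum : ∑ i, w i = 1) (ha : ∀ i, |a i| ≤ C) :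
    |∑ i, w i * a i| ≤ C :=
  calc |∑ i, w i * a i| ≤ ∑ i, w i * |a i| :=
        (abs_sum_le_sum_abs _ _).trans_eq (by simp [abs_mul, abs_of_nonneg (hw _)])
    _ ≤ ∑ i, w i * C := sum_le_sum fun i _ => mul_le_mul_of_nonneg_left (ha i) (hw i)
    _ = C := by rw [← sum_mul, hsum, one_mul]

section Integrability

variable {α ι : Type*} [Fintype ι] [MeasurableSpace α] {μ : Measure α} [IsFiniteMeasure μ]

lemma integrable_of_abs_le {f : α → ℝ} (hf : Measurable f) (hb : ∃ C, ∀ x, |f x| ≤ C) :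
    Integrable f μ :=
  let ⟨C, hC⟩ := hb
  .of_bound hf.aestronglyMeasurable C (.of_forall hC)

lemma integrable_sum_mul_comp {τ : ι → α → α} {w : ι → α → ℝ} {f : α → ℝ}
    (hτ : ∀ i, Measurable (τ i)) (hw : ∀ i, Measurable (w i)) (hw0 : ∀ i x, 0 ≤ w i x)
    (hwsum : ∀ x, ∑ i, w i x = 1) (hf : Measurable f) (hb : ∃ C, ∀ x, |f x| ≤ C) :
    Integrable (fun x => ∑ i, w i x * f (τ i x)) μ :=
  let ⟨C, hC⟩ := hb
  integrable_of_abs_le (Finset.measurable_sum _ fun i _ => (hw i).mul (hf.comp (hτ i)))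
    ⟨C, fun x => abs_sum_mul_le_of_sum_eq_one (hw0 · x) (hwsum x) fun _ => hC _⟩

lemma integrable_sum_mul_log {w : ι → α → ℝ} (hw : ∀ i, Measurable (w i))
    (hw0 : ∀ i x, 0 ≤ w i x) (hw1 : ∀ i x, w i x ≤ 1) :
    Integrable (fun x => ∑ i, w i x * log (w i x)) μ :=
  integrable_finsetSum _ fun i _ => integrable_of_abs_le ((hw i).mul (hw i).log)
    ⟨1, fun x => abs_mul_log_le_one (hw0 i x) (hw1 i x)⟩

end Integrability

namespace MemBplus

variable {f g : unitInterval → ℝ}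

lemma pos (hf : MemBplus f) (x : unitInterval) : 0 < f x :=
  let ⟨_, _, _, hc, hlo, _⟩ := hf
  hc.trans_le (hlo x)

lemma mul (hf : MemBplus f) (hg : MemBplus g) : MemBplus (f * g) := by
  obtain ⟨hfm, c, C, hc, hlo, hhi⟩ := hf
  obtain ⟨hgm, c', C', hc', hlo', hhi'⟩ := hg
  exact ⟨hfm.mul hgm, c * c', C * C', mul_pos hc hc',
    fun x => mul_le_mul (hlo x) (hlo' x) hc'.le (hc.trans_le (hlo x)).le,
    fun x => mul_le_mul (hhi x) (hhi' x) (hc'.trans_le (hlo' x)).le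
      ((hc.trans_le (hlo x)).trans_le (hhi x)).le⟩

lemma exists_abs_log_le (hf : MemBplus f) : ∃ C, ∀ x, |log (f x)| ≤ C := by
  obtain ⟨_, c, C, hc, hlo, hhi⟩ := hf
  exact ⟨max |log c| |log C|, fun x =>
    abs_le_max_abs_abs (log_le_log hc (hlo x)) (log_le_log (hc.trans_le (hlo x)) (hhi x))⟩

lemma integrable_log {μ : Measure unitInterval} [IsFiniteMeasure μ] (hf : MemBplus f) :
    Integrable (fun x => log (f x)) μ :=
  integrable_of_abs_le hf.1.log hf.exists_abs_log_le

end MemBplus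

section NormalizedWeights

variable {ι : Type*} [Fintype ι] {τ : ι → unitInterval → unitInterval} {φ h : unitInterval → ℝ}
  {ρ : ℝ}

lemma sum_normalized_weight_eq_one (hh : MemBplus h) (hρ : 0 < ρ)
    (heig : ∀ x, ∑ i, φ (τ i x) * h (τ i x) = ρ * h x) (x : unitInterval) :
    ∑ i, φ (τ i x) * h (τ i x) / (ρ * h x) = 1 := by
  rw [← sum_div, heig, div_self (mul_pos hρ (hh.pos x)).ne']

variable {ν : Measure unitInterval} {w : ι → unitInterval → ℝ}

lemma sum_mul_log_normalized_weight (hφ : MemBplus φ) (hh : MemBplus h) (hρ : 0 < ρ)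
    (hwsum : ∀ x, ∑ i, w i x = 1) (x : unitInterval) :
    ∑ i, w i x * log (φ (τ i x) * h (τ i x) / (ρ * h x))
      = ∑ i, w i x * log (φ (τ i x) * h (τ i x)) - (log ρ + log (h x)) := by
  have hlog : ∀ i, log (φ (τ i x) * h (τ i x) / (ρ * h x))
      = log (φ (τ i x) * h (τ i x)) - (log ρ + log (h x)) := fun i => by
    rw [log_div (mul_pos (hφ.pos _) (hh.pos _)).ne' (mul_pos hρ (hh.pos x)).ne',
      log_mul hρ.ne' (hh.pos x).ne']
  simp only [hlog, mul_sub, sum_sub_distrib, ← sum_mul, hwsum, one_mul]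

lemma integrable_sum_mul_log_comp [IsFiniteMeasure ν] (hτ : ∀ i, Measurable (τ i))
    (hφ : MemBplus φ) (hh : MemBplus h) (hw : ∀ i, Measurable (w i)) (hw0 : ∀ i x, 0 ≤ w i x)
    (hwsum : ∀ x, ∑ i, w i x = 1) :
    Integrable (fun x => ∑ i, w i x * log (φ (τ i x) * h (τ i x))) ν :=
  integrable_sum_mul_comp (f := fun x => log (φ x * h x)) hτ hw hw0 hwsum
    (hφ.1.mul hh.1).log (hφ.mul hh).exists_abs_log_le

lemma integrable_sum_mul_log_normalized_weight [IsFiniteMeasure ν] (hτ : ∀ i, Measurable (τ i))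
    (hφ : MemBplus φ) (hh : MemBplus h) (hρ : 0 < ρ) (hw : ∀ i, Measurable (w i))
    (hw0 : ∀ i x, 0 ≤ w i x) (hwsum : ∀ x, ∑ i, w i x = 1) :
    Integrable (fun x => ∑ i, w i x * log (φ (τ i x) * h (τ i x) / (ρ * h x))) ν := by
  simp only [sum_mul_log_normalized_weight hφ hh hρ hwsum]
  exact (integrable_sum_mul_log_comp hτ hφ hh hw hw0 hwsum).sub
    ((integrable_const _).add hh.integrable_log)

lemma integral_sum_mul_log_normalized_weight [IsProbabilityMeasure ν]
    (hτ : ∀ i, Measurable (τ i)) (hφ : MemBplus φ) (hh : MemBplus h) (hρ : 0 < ρ)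
    (hw : ∀ i, Measurable (w i)) (hw0 : ∀ i x, 0 ≤ w i x) (hwsum : ∀ x, ∑ i, w i x = 1)
    (hinv : ∫ x, ∑ i, w i x * log (φ (τ i x) * h (τ i x)) ∂ν = ∫ x, log (φ x * h x) ∂ν) :
    ∫ x, ∑ i, w i x * log (φ (τ i x) * h (τ i x) / (ρ * h x)) ∂ν
      = ∫ x, log (φ x) ∂ν - log ρ := by
  have hsplit : ∫ x, log (φ x * h x) ∂ν = ∫ x, log (φ x) ∂ν + ∫ x, log (h x) ∂ν := by
    simp only [log_mul (hφ.pos _).ne' (hh.pos _).ne']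
    exact integral_add hφ.integrable_log hh.integrable_log
  have hlog_h : Integrable (fun x => log ρ + log (h x)) ν :=
    (integrable_const _).add hh.integrable_log
  simp only [sum_mul_log_normalized_weight hφ hh hρ hwsum]
  rw [integral_sub (integrable_sum_mul_log_comp hτ hφ hh hw hw0 hwsum) hlog_h, hinv, hsplit,
    integral_add (integrable_const _) hh.integrable_log, integral_const, probReal_univ, one_smul]
  ring

end NormalizedWeights

theorem stmt19_general {d : ℕ} (τ : Fin d → unitInterval → unitInterval)
    (hτ : ∀ i, Continuous (τ i))
    (φ : unitInterval → ℝ) (hφ : MemBplus φ)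
    (ρ : ℝ) (hρ : 0 < ρ) (h : unitInterval → ℝ) (hh : MemBplus h)
    (heig : ∀ x, (∑ i : Fin d, φ (τ i x) * h (τ i x)) = ρ * h x)
    (u : Fin d → unitInterval → ℝ)
    (hu : ∀ i x, u i x = φ (τ i x) * h (τ i x) / (ρ * h x))
    (ν : Measure unitInterval) [IsProbabilityMeasure ν]
    (v : Fin d → unitInterval → ℝ) (hvmeas : ∀ i, Measurable (v i))
    (hvpos : ∀ i x, 0 < v i x) (hvle : ∀ i x, v i x ≤ 1)
    (hvsum : ∀ x, ∑ i : Fin d, v i x = 1)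
    (hinv : ∀ f : unitInterval → ℝ, Measurable f → (∃ C : ℝ, ∀ x, |f x| ≤ C) →
      (∫ x, ∑ i : Fin d, v i x * f (τ i x) ∂ν) = ∫ x, f x ∂ν)
    (heq : (-(∫ x, ∑ i : Fin d, v i x * Real.log (v i x) ∂ν))
      + (∫ x, Real.log (φ x) ∂ν) = Real.log ρ) :
    (∀ i : Fin d, ∀ᵐ x ∂ν, v i x = u i x) ∧
    (∀ f : unitInterval → ℝ, Measurable f → (∃ C : ℝ, ∀ x, |f x| ≤ C) →
      (∫ x, ∑ i : Fin d, u i x * f (τ i x) ∂ν) = ∫ x, f x ∂ν) := by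
  obtain rfl : u = fun i x => φ (τ i x) * h (τ i x) / (ρ * h x) := funext₂ hu
  have hτm : ∀ i, Measurable (τ i) := fun i => (hτ i).measurable
  have hv0 : ∀ i x, 0 ≤ v i x := fun i x => (hvpos i x).le
  have hlogu_int := integrable_sum_mul_log_normalized_weight (ν := ν) hτm hφ hh hρ hvmeas hv0 hvsum
  have hlogu := integral_sum_mul_log_normalized_weight hτm hφ hh hρ hvmeas hv0 hvsum
    (hinv _ (hφ.1.mul hh.1).log (hφ.mul hh).exists_abs_log_le)
  have hlogv_int := integrable_sum_mul_log (μ := ν) hvmeas hv0 hvle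
  have hv_eq_u : ∀ i, v i =ᵐ[ν] fun x => φ (τ i x) * h (τ i x) / (ρ * h x) :=
    ae_eq_of_integral_sum_mul_log_sub_log_eq_zero
      (fun i x => div_pos (mul_pos (hφ.pos _) (hh.pos _)) (mul_pos hρ (hh.pos x))) hvpos
      (fun x => by rw [hvsum, sum_normalized_weight_eq_one hh hρ heig])
      (by simpa only [mul_sub, sum_sub_distrib, Pi.sub_def] using hlogu_int.sub hlogv_int)
      (by simp only [mul_sub, sum_sub_distrib]; rw [integral_sub hlogu_int hlogv_int]; linarith)
  refine ⟨hv_eq_u, fun f hf hfb => ?_⟩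
  rw [← hinv f hf hfb]
  refine integral_congr_ae ?_
  filter_upwards [ae_all_iff.2 hv_eq_u] with x hx
  simp only [hx]

theorem stmt19 {d : ℕ} (hd : 1 ≤ d) (τ : Fin d → unitInterval → unitInterval)
    (hτ : ∀ i, Continuous (τ i))
    (φ : unitInterval → ℝ) (hφ : MemBplus φ)
    (ρ : ℝ) (hρ : 0 < ρ) (h : unitInterval → ℝ) (hh : MemBplus h)
    (heig : ∀ x, (∑ i : Fin d, φ (τ i x) * h (τ i x)) = ρ * h x)
    (u : Fin d → unitInterval → ℝ)
    (hu : ∀ i x, u i x = φ (τ i x) * h (τ i x) / (ρ * h x))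
    (ν : Measure unitInterval) [IsProbabilityMeasure ν]
    (v : Fin d → unitInterval → ℝ) (hvmeas : ∀ i, Measurable (v i))
    (hvpos : ∀ i x, 0 < v i x) (hvle : ∀ i x, v i x ≤ 1)
    (hvsum : ∀ x, ∑ i : Fin d, v i x = 1)
    (hinv : ∀ f : unitInterval → ℝ, Measurable f → (∃ C : ℝ, ∀ x, |f x| ≤ C) →
      (∫ x, ∑ i : Fin d, v i x * f (τ i x) ∂ν) = ∫ x, f x ∂ν)
    (heq : (-(∫ x, ∑ i : Fin d, v i x * Real.log (v i x) ∂ν))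
      + (∫ x, Real.log (φ x) ∂ν) = Real.log ρ) :
    (∀ i : Fin d, ∀ᵐ x ∂ν, v i x = u i x) ∧
    (∀ f : unitInterval → ℝ, Measurable f → (∃ C : ℝ, ∀ x, |f x| ≤ C) →
      (∫ x, ∑ i : Fin d, u i x * f (τ i x) ∂ν) = ∫ x, f x ∂ν) :=
  stmt19_general τ hτ φ hφ ρ hρ h hh heig u hu ν v hvmeas hvpos hvle hvsum hinv heq
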